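/- arXiv:1203.1584 — 6 statements merged into one kernel-verified Lean document; each statement's English description precedes it below -/
import Mathlib

section
/- If G is a connected graph of order n with diameter d, then the metric dimension of G is at most n - d. -/
/-!
Take vertices `u`, `v` at distance `d = diam G` and a shortest `u`–`v` path. Its vertices
`p₁, …, p_d` after `u` satisfy `d(u, pᵢ) = i`, so the complement `W` of `{p₁, …, p_d}` resolves
`G`: a vertex of `W` is the only vertex at distance `0` from itself, and two vertices outside
`W` are told apart by their distances to `u ∈ W`. Hence `β(G) ≤ |W| = n - d`.
-/

open SimpleGraph

/-- `W` is a resolving set for `G`: distinct vertices have distinct distance vectors to `W`. -/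
def Resolves {V : Type*} (G : SimpleGraph V) (W : Set V) : Prop :=
  ∀ u v : V, u ≠ v → ∃ w ∈ W, G.dist u w ≠ G.dist v w

/-- The metric dimension of `G`: minimum cardinality of a resolving set. -/
noncomputable def metricDim {V : Type*} [Fintype V] (G : SimpleGraph V) : ℕ :=
  sInf {k | ∃ W : Finset V, W.card = k ∧ Resolves G ↑W}

namespace SimpleGraph

variable {V : Type*} {G : SimpleGraph V}

lemma Walk.dist_getVert_of_length_eq_dist {u v : V} (p : G.Walk u v)
    (hp : p.length = G.dist u v) {i : ℕ} (hi : i ≤ p.length) :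
    G.dist u (p.getVert i) = i := by
  have hprefix : G.dist u (p.getVert i) ≤ i := (dist_le (p.take i)).trans (by simp)
  have hsuffix : G.dist (p.getVert i) v ≤ p.length - i := (dist_le (p.drop i)).trans (by simp)
  have htriangle := (p.take i).reachable.dist_triangle_left v
  omega

open Finset in
lemma exists_finset_card_eq_dist_injOn_dist (u v : V) :
    ∃ S : Finset V, #S = G.dist u v ∧ u ∉ S ∧ Set.InjOn (G.dist u) S := by
  classical
  by_cases huv : G.Reachable u v
  · obtain ⟨p, hp⟩ := huv.exists_walk_length_eq_dist
    have hdist : ∀ i ∈ Icc 1 (G.dist u v), G.dist u (p.getVert i) = i := fun i hi ↦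
      p.dist_getVert_of_length_eq_dist hp (hp ▸ (mem_Icc.mp hi).2)
    refine ⟨(Icc 1 (G.dist u v)).image p.getVert, ?_, ?_, ?_⟩
    · rw [card_image_of_injOn fun i hi j hj hij ↦ by
        rw [← hdist i hi, ← hdist j hj, hij], Nat.card_Icc,
        Nat.add_sub_cancel]
    · simp only [mem_image, not_exists, not_and]
      intro i hi hiu
      have hi0 := hdist i hi
      rw [hiu, dist_self] at hi0
      exact absurd hi0 (Nat.one_le_iff_ne_zero.mp (mem_Icc.mp hi).1).symm
    · rintro _ hx _ hy hxy
      obtain ⟨i, hi, rfl⟩ := mem_image.mp hx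
      obtain ⟨j, hj, rfl⟩ := mem_image.mp hy
      rw [← hdist i hi, ← hdist j hj, hxy]
  · exact ⟨∅, by simp [dist_eq_zero_of_not_reachable huv], by simp, by simp⟩

end SimpleGraph

lemma resolves_of_injOn_dist {V : Type*} {G : SimpleGraph V} (hG : G.Connected) {W : Set V}
    {u : V} (hu : u ∈ W) (hinj : Set.InjOn (G.dist u) Wᶜ) : Resolves G W := by
  intro a b hab
  by_cases ha : a ∈ W
  · exact ⟨a, ha, by rw [dist_self]; exact (hG.pos_dist_of_ne hab.symm).ne⟩
  by_cases hb : b ∈ W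
  · exact ⟨b, hb, by rw [dist_self]; exact (hG.pos_dist_of_ne hab).ne'⟩
  refine ⟨u, hu, fun hdist ↦ hab (hinj ha hb ?_)⟩
  rwa [dist_comm, G.dist_comm (u := b)] at hdist

lemma metricDim_le_card {V : Type*} [Fintype V] {G : SimpleGraph V} {W : Finset V}
    (hW : Resolves G W) : metricDim G ≤ W.card :=
  Nat.sInf_le ⟨W, rfl, hW⟩

theorem stmt0 {V : Type*} [Fintype V] (G : SimpleGraph V) (hG : G.Connected) :
    metricDim G ≤ Fintype.card V - G.diam := by
  classical
  have := hG.nonempty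
  obtain ⟨u, v, huv⟩ := G.exists_dist_eq_diam
  obtain ⟨S, hcard, huS, hinj⟩ := G.exists_finset_card_eq_dist_injOn_dist u v
  calc metricDim G ≤ Sᶜ.card :=
        metricDim_le_card (resolves_of_injOn_dist hG (u := u) (by simpa) (by simpa using hinj))
    _ = Fintype.card V - G.diam := by rw [Finset.card_compl, hcard, huv]
end

section
/- If G is a connected graph of order n, then β(G) = n - 1 if and only if G is the complete graph K_n. -/
open SimpleGraph

/- The whole vertex set minus one vertex always resolves a connected graph, since every vertex of
a resolving set is told apart from all others by its own zero distance. In `K_n` all distances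
between distinct vertices are `1`, so two vertices outside a resolving set could not be separated.
If `G ≠ K_n` is connected, a shortest path between two non-adjacent vertices starts with an induced
path `x a b`; then `b` separates `x` (at distance `2`) from `a` (at distance `1`), so the complement
of `{x, a}` resolves `G` and `β(G) ≤ n - 2`. -/

namespace SimpleGraph

variable {V : Type*} {G : SimpleGraph V}

lemma resolves_of_separates_compl (hG : G.Connected) {W : Set V}
    (h : ∀ u v, u ∉ W → v ∉ W → u ≠ v → ∃ w ∈ W, G.dist u w ≠ G.dist v w) :
    Resolves G W := by
  intro u v huv
  by_cases hu : u ∈ W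
  · exact ⟨u, hu, by rw [dist_self]; exact (hG.pos_dist_of_ne huv.symm).ne⟩
  by_cases hv : v ∈ W
  · exact ⟨v, hv, by rw [dist_self]; exact (hG.pos_dist_of_ne huv).ne'⟩
  exact h u v hu hv huv

lemma Connected.exists_adj_adj_not_adj_ne (hG : G.Connected) (hne : G ≠ ⊤) :
    ∃ x a b : V, G.Adj x a ∧ G.Adj a b ∧ ¬G.Adj x b ∧ x ≠ b := by
  obtain ⟨u, v, huv, hnadj⟩ := ne_top_iff_exists_not_adj.mp hne
  obtain ⟨p, hp⟩ := hG.exists_walk_length_eq_dist u v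
  exact p.exists_adj_adj_not_adj_ne hp (hG.one_lt_dist_of_ne_of_not_adj huv hnadj)

section metricDim

variable [Fintype V]

lemma card_sub_one_le_of_resolves_top {W : Finset V} (hW : Resolves (⊤ : SimpleGraph V) W) :
    Fintype.card V - 1 ≤ W.card := by
  classical
  by_contra! hlt
  have hcompl : 1 < Wᶜ.card := by rw [Finset.card_compl]; omega
  obtain ⟨a, ha, b, hb, hab⟩ := Finset.one_lt_card.mp hcompl
  obtain ⟨w, hw, hdist⟩ := hW a b hab
  have haw : a ≠ w := by rintro rfl; simp_all
  have hbw : b ≠ w := by rintro rfl; simp_all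
  exact hdist (by rw [dist_top_of_ne haw, dist_top_of_ne hbw])

lemma metricDim_le {W : Finset V} (hW : Resolves G W) : metricDim G ≤ W.card := by
  unfold metricDim
  exact Nat.sInf_le ⟨W, rfl, hW⟩

lemma exists_resolves_card_eq_metricDim {W : Finset V} (hW : Resolves G W) :
    ∃ W : Finset V, W.card = metricDim G ∧ Resolves G W := by
  have hne : {k | ∃ W : Finset V, W.card = k ∧ Resolves G ↑W}.Nonempty := ⟨_, W, rfl, hW⟩
  exact Nat.sInf_mem hne

lemma Connected.resolves_compl_singleton [DecidableEq V] (hG : G.Connected) (v : V) :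
    Resolves G ↑({v}ᶜ : Finset V) :=
  resolves_of_separates_compl hG fun a b ha hb hab => by simp_all

lemma Connected.metricDim_le_card_sub_one (hG : G.Connected) :
    metricDim G ≤ Fintype.card V - 1 := by
  classical
  obtain ⟨v⟩ := hG.nonempty
  simpa [Finset.card_compl] using metricDim_le (hG.resolves_compl_singleton v)

lemma metricDim_top [Nonempty V] : metricDim (⊤ : SimpleGraph V) = Fintype.card V - 1 := by
  classical
  obtain ⟨v⟩ := ‹Nonempty V›
  obtain ⟨W, hcard, hW⟩ :=
    exists_resolves_card_eq_metricDim (connected_top.resolves_compl_singleton v)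
  exact le_antisymm connected_top.metricDim_le_card_sub_one
    (hcard ▸ card_sub_one_le_of_resolves_top hW)

lemma Connected.metricDim_lt_card_sub_one (hG : G.Connected) (hne : G ≠ ⊤) :
    metricDim G < Fintype.card V - 1 := by
  classical
  obtain ⟨x, a, b, hxa, hab, hnadj, hxb⟩ := hG.exists_adj_adj_not_adj_ne hne
  have hsep : G.dist x b ≠ G.dist a b := by
    rwa [dist_eq_one_iff_adj.mpr hab, Ne, dist_eq_one_iff_adj]
  have hW : Resolves G ↑({x, a}ᶜ : Finset V) := by
    refine resolves_of_separates_compl hG fun u v hu hv huv => ⟨b, ?_, ?_⟩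
    · simp [hxb.symm, hab.ne.symm]
    · simp only [Finset.coe_compl, Set.mem_compl_iff, Finset.coe_insert, Finset.coe_singleton,
        Set.mem_insert_iff, Set.mem_singleton_iff, not_not] at hu hv
      rcases hu with rfl | rfl <;> rcases hv with rfl | rfl
      exacts [absurd rfl huv, hsep, hsep.symm, absurd rfl huv]
  have hcard : ({x, a}ᶜ : Finset V).card = Fintype.card V - 2 := by
    rw [Finset.card_compl, Finset.card_pair hxa.ne]
  have htwo : 2 ≤ Fintype.card V := Fintype.one_lt_card_iff_nontrivial.mpr ⟨x, a, hxa.ne⟩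
  have := metricDim_le hW
  omega

end metricDim

end SimpleGraph

theorem stmt1 {V : Type*} [Fintype V] (G : SimpleGraph V) (hG : G.Connected) :
    metricDim G = Fintype.card V - 1 ↔ G = ⊤ := by
  refine ⟨fun h => ?_, ?_⟩
  · by_contra hne
    exact (hG.metricDim_lt_card_sub_one hne).ne h
  · rintro rfl
    have := hG.nonempty
    exact metricDim_top
end

section
/- Let v be a cut vertex of a connected graph G and let W be a resolving set for G. Then W is disjoint from at most one connected component of G \ {v}. -/
open SimpleGraph

/-!
Let `x` and `y` be neighbours of the cut vertex `v` lying in two distinct components of `G - v`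
that contain no vertex of `W`. Every path from `x` to a vertex `w ∈ W` leaves the component of
`x` through `v`, so `d(x, w) = 1 + d(v, w)`, and likewise `d(y, w) = 1 + d(v, w)`. Hence no vertex
of `W` distinguishes `x` from `y`.
-/

namespace SimpleGraph

variable {V : Type*} {G : SimpleGraph V}

lemma Reachable.dist_eq_add_of_forall_mem_support {u v w : V} (hr : G.Reachable u w)
    (hv : ∀ p : G.Walk u w, v ∈ p.support) : G.dist u w = G.dist u v + G.dist v w := by
  classical
  obtain ⟨p, hp⟩ := hr.exists_walk_length_eq_dist
  have hvp := hv p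
  refine le_antisymm ((p.takeUntil v hvp).reachable.dist_triangle_left w) ?_
  calc G.dist u v + G.dist v w
      ≤ (p.takeUntil v hvp).length + (p.dropUntil v hvp).length :=
        add_le_add (dist_le _) (dist_le _)
    _ = G.dist u w := by rw [← Walk.length_append, p.take_spec hvp, hp]

lemma Connected.exists_mem_supp_induce_adj_notMem {s : Set V} (hG : G.Connected) {b : V}
    (hb : b ∉ s) (c : (G.induce s).ConnectedComponent) :
    ∃ x ∈ c.supp, ∃ y ∉ s, G.Adj x y := by
  obtain ⟨⟨a, ha⟩, rfl⟩ := c.exists_rep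
  obtain ⟨p⟩ := hG a b
  obtain ⟨⟨⟨x, y⟩, hxy⟩, -, ⟨⟨x, hx⟩, hxc, rfl⟩, hyc⟩ :=
    p.exists_boundary_dart (Subtype.val '' ((G.induce s).connectedComponentMk ⟨a, ha⟩).supp)
      ⟨⟨a, ha⟩, rfl, rfl⟩ fun ⟨⟨_, hb'⟩, _, h⟩ ↦ hb (h ▸ hb')
  refine ⟨⟨x, hx⟩, hxc, y, fun hy ↦ hyc ⟨⟨y, hy⟩, ?_, rfl⟩, hxy⟩
  rw [ConnectedComponent.mem_supp_iff] at hxc ⊢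
  rw [← hxc]
  exact ConnectedComponent.connectedComponentMk_eq_of_adj (induce_adj.2 hxy.symm)

lemma mem_support_of_forall_mem_supp_ne {v w : V}
    {c : (G.induce ({v}ᶜ : Set V)).ConnectedComponent} {z : ({v}ᶜ : Set V)} (hz : z ∈ c.supp)
    (hw : ∀ x ∈ c.supp, (x : V) ≠ w) (p : G.Walk z w) : v ∈ p.support := by
  by_contra hvp
  have hp : ∀ x ∈ p.support, x ∈ ({v}ᶜ : Set V) := fun x hx hxv ↦ hvp (hxv ▸ hx)
  refine hw ⟨w, hp w p.end_mem_support⟩ ?_ rfl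
  rw [ConnectedComponent.mem_supp_iff] at hz ⊢
  exact hz ▸ ConnectedComponent.sound (p.induce _ hp).reachable.symm

end SimpleGraph

theorem stmt3_general {V : Type*} (G : SimpleGraph V) (hG : G.Connected) (v : V)
    (W : Set V) (hW : Resolves G W)
    (c d : (G.induce ({v}ᶜ : Set V)).ConnectedComponent)
    (hc : ∀ x ∈ c.supp, (x : V) ∉ W) (hd : ∀ x ∈ d.supp, (x : V) ∉ W) :
    c = d := by
  have hv_compl : v ∉ ({v}ᶜ : Set V) := fun h ↦ h rfl
  obtain ⟨x, hxc, x', hx', hxv⟩ := hG.exists_mem_supp_induce_adj_notMem hv_compl c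
  obtain ⟨y, hyd, y', hy', hyv⟩ := hG.exists_mem_supp_induce_adj_notMem hv_compl d
  rw [Set.notMem_compl_iff, Set.mem_singleton_iff] at hx' hy'
  subst x' y'
  by_contra hcd
  have hxy : (x : V) ≠ y := fun h ↦ hcd <| by
    rw [← (c.mem_supp_iff x).1 hxc, ← (d.mem_supp_iff y).1 hyd, Subtype.ext h]
  obtain ⟨w, hwW, hne⟩ := hW x y hxy
  have dist_through {e : (G.induce ({v}ᶜ : Set V)).ConnectedComponent} {z : ({v}ᶜ : Set V)}
      (hz : z ∈ e.supp) (he : ∀ u ∈ e.supp, (u : V) ∉ W) (hzv : G.Adj z v) :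
      G.dist z w = 1 + G.dist v w := by
    rw [(hG z w).dist_eq_add_of_forall_mem_support
        (mem_support_of_forall_mem_supp_ne hz fun u hu h ↦ he u hu (h ▸ hwW)),
      dist_eq_one_iff_adj.2 hzv]
  exact hne ((dist_through hxc hc hxv).trans (dist_through hyd hd hyv).symm)

theorem stmt3 {V : Type*} [Fintype V] (G : SimpleGraph V) (hG : G.Connected) (v : V)
    (hv : ¬ (G.induce ({v}ᶜ : Set V)).Connected) (W : Set V) (hW : Resolves G W)
    (c d : (G.induce ({v}ᶜ : Set V)).ConnectedComponent)
    (hc : ∀ x ∈ c.supp, (x : V) ∉ W) (hd : ∀ x ∈ d.supp, (x : V) ∉ W) :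
    c = d :=
  stmt3_general G hG v W hW c d hc hd
end

section
/- Let v be a cut vertex of a connected graph G and let W be a resolving set for G that intersects at least two connected components of G \ {v}. Then W \ {v} is also a resolving set for G. -/
/-!
Let `x, y ∈ W` lie in different components of `G - v`. Every vertex `u ≠ v` is separated by `v`
from one of them, say `z`, so `d(u, z) = d(u, v) + d(v, z)`. Hence if `x` and `y` both fail to
distinguish `u` from `u'`, then `d(u, v) ≤ d(u', v)` by the triangle inequality through `v`, and
by symmetry `v` fails too. So whatever `v` resolves is already resolved by `x` or `y`.
-/

open SimpleGraph

namespace SimpleGraph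

variable {V : Type*} {G : SimpleGraph V}

theorem Walk.reachable_induce_of_support_subset {a b : V} (p : G.Walk a b) {s : Set V}
    (hs : {x | x ∈ p.support} ⊆ s) :
    (G.induce s).Reachable ⟨a, hs p.start_mem_support⟩ ⟨b, hs p.end_mem_support⟩ :=
  (p.connected_induce_support.preconnected ⟨a, p.start_mem_support⟩
    ⟨b, p.end_mem_support⟩).map (induceHomOfLE _ hs).toHom

theorem dist_eq_add_of_not_reachable_induce_compl {v a b : V} (hab : G.Reachable a b)
    (ha : a ∈ ({v}ᶜ : Set V)) (hb : b ∈ ({v}ᶜ : Set V))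
    (hsep : ¬ (G.induce ({v}ᶜ : Set V)).Reachable ⟨a, ha⟩ ⟨b, hb⟩) :
    G.dist a b = G.dist a v + G.dist v b := by
  classical
  obtain ⟨p, hp⟩ := hab.exists_walk_length_eq_dist
  have hvp : v ∈ p.support := by
    by_contra hvp
    exact hsep (p.reachable_induce_of_support_subset fun x hx (hxv : x = v) => hvp (hxv ▸ hx))
  refine le_antisymm (Reachable.dist_triangle_left ⟨p.takeUntil v hvp⟩ b) ?_
  calc G.dist a v + G.dist v b
      ≤ (p.takeUntil v hvp).length + (p.dropUntil v hvp).length :=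
        add_le_add (dist_le _) (dist_le _)
    _ = G.dist a b := by rw [← Walk.length_append, Walk.take_spec, hp]

variable {v : V}

theorem Connected.dist_le_dist_of_not_reachable_induce_compl (hG : G.Connected)
    {u u' : V} {z : ({v}ᶜ : Set V)} (hu : u ∈ ({v}ᶜ : Set V))
    (hsep : ¬ (G.induce ({v}ᶜ : Set V)).Reachable ⟨u, hu⟩ z)
    (hz : G.dist u z = G.dist u' z) :
    G.dist u v ≤ G.dist u' v := by
  have hsplit := dist_eq_add_of_not_reachable_induce_compl (hG u z) hu z.2 hsep
  have htri : G.dist u' z ≤ G.dist u' v + G.dist v z := hG.dist_triangle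
  omega

theorem Connected.dist_le_dist_of_dist_eq_of_not_reachable (hG : G.Connected)
    {x y : ({v}ᶜ : Set V)} (hxy : ¬ (G.induce ({v}ᶜ : Set V)).Reachable x y) {u u' : V}
    (hx : G.dist u x = G.dist u' x) (hy : G.dist u y = G.dist u' y) :
    G.dist u v ≤ G.dist u' v := by
  by_cases huv : u = v
  · simp [huv]
  by_cases hux : (G.induce ({v}ᶜ : Set V)).Reachable ⟨u, huv⟩ x
  · exact hG.dist_le_dist_of_not_reachable_induce_compl huv
      (fun huy => hxy (hux.symm.trans huy)) hy
  · exact hG.dist_le_dist_of_not_reachable_induce_compl huv hux hx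

end SimpleGraph

theorem stmt4_general {V : Type*} (G : SimpleGraph V) (hG : G.Connected) (v : V)
    (W : Set V) (hW : Resolves G W)
    (x y : ({v}ᶜ : Set V))
    (hxy : (G.induce ({v}ᶜ : Set V)).connectedComponentMk x ≠
      (G.induce ({v}ᶜ : Set V)).connectedComponentMk y)
    (hx : (x : V) ∈ W) (hy : (y : V) ∈ W) :
    Resolves G (W \ {v}) := by
  have hsep : ¬ (G.induce ({v}ᶜ : Set V)).Reachable x y := mt ConnectedComponent.sound hxy
  intro u u' hne
  obtain ⟨w, hwW, hwd⟩ := hW u u' hne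
  by_cases hwv : w = v
  · subst hwv
    by_contra! hsame
    have hdx := hsame x ⟨hx, x.2⟩
    have hdy := hsame y ⟨hy, y.2⟩
    exact hwd (le_antisymm (hG.dist_le_dist_of_dist_eq_of_not_reachable hsep hdx hdy)
      (hG.dist_le_dist_of_dist_eq_of_not_reachable hsep hdx.symm hdy.symm))
  · exact ⟨w, ⟨hwW, hwv⟩, hwd⟩

theorem stmt4 {V : Type*} [Fintype V] (G : SimpleGraph V) (hG : G.Connected) (v : V)
    (hv : ¬ (G.induce ({v}ᶜ : Set V)).Connected) (W : Set V) (hW : Resolves G W)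
    (x y : ({v}ᶜ : Set V))
    (hxy : (G.induce ({v}ᶜ : Set V)).connectedComponentMk x ≠
      (G.induce ({v}ᶜ : Set V)).connectedComponentMk y)
    (hx : (x : V) ∈ W) (hy : (y : V) ∈ W) :
    Resolves G (W \ {v}) :=
  stmt4_general G hG v W hW x y hxy hx hy
end

section
/- For the complete bipartite graph K_{r,s} with r,s ≥ 2, the metric dimension is r + s - 2. -/
open SimpleGraph

/-! In `K_{r,s}` two vertices on the same side have the same distance to every third vertex
(`2` if it lies on their side, `1` otherwise), so a resolving set misses at most one vertex of
each side. Conversely, removing one vertex `x` from each side leaves a resolving set: a vertex of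
the set is singled out by its zero distance to itself, and the two removed vertices are told
apart by any other vertex on the side of `x`. -/

namespace SimpleGraph

variable {V : Type*} {G : SimpleGraph V} {u v w : V}

lemma dist_eq_two_of_adj_of_adj (hne : u ≠ v) (hnadj : ¬G.Adj u v) (huw : G.Adj u w)
    (hwv : G.Adj w v) : G.dist u v = 2 := by
  let p : G.Walk u v := .cons huw (.cons hwv .nil)
  have hle : G.dist u v ≤ 2 := dist_le p
  have hlt : 1 < G.dist u v := Reachable.one_lt_dist_of_ne_of_not_adj ⟨p⟩ hne hnadj
  omega

end SimpleGraph

section Resolves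

variable {V : Type*} {G : SimpleGraph V} {W : Set V}

lemma Resolves.mem_or_mem_of_dist_eq (hW : Resolves G W) {u v : V} (hne : u ≠ v)
    (htwin : ∀ w, w ≠ u → w ≠ v → G.dist u w = G.dist v w) : u ∈ W ∨ v ∈ W := by
  by_contra! h
  obtain ⟨w, hw, hdist⟩ := hW u v hne
  exact hdist (htwin w (fun hwu ↦ h.1 (hwu ▸ hw)) (fun hwv ↦ h.2 (hwv ▸ hw)))

lemma resolves_of_forall_notMem (hG : G.Preconnected)
    (h : ∀ u v, u ≠ v → u ∉ W → v ∉ W → ∃ w ∈ W, G.dist u w ≠ G.dist v w) :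
    Resolves G W := by
  intro u v hne
  by_cases hu : u ∈ W
  · exact ⟨u, hu, by rw [dist_self]; exact ((hG v u).pos_dist_of_ne hne.symm).ne⟩
  by_cases hv : v ∈ W
  · exact ⟨v, hv, by rw [dist_self]; exact ((hG u v).pos_dist_of_ne hne).ne'⟩
  exact h u v hne hu hv

end Resolves

section CompleteBipartite

variable {α β : Type*}

lemma completeBipartiteGraph_dist [DecidableEq α] [DecidableEq β] [Nonempty α] [Nonempty β]
    (x y : α ⊕ β) :
    (completeBipartiteGraph α β).dist x y =
      if x = y then 0 else if x.isLeft = y.isLeft then 2 else 1 := by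
  split_ifs with hxy hside
  · rw [hxy, dist_self]
  · refine dist_eq_two_of_adj_of_adj hxy (by cases x <;> cases y <;> simp_all) ?_ ?_
      (w := if x.isLeft then .inr (Classical.arbitrary β) else .inl (Classical.arbitrary α))
    all_goals cases x <;> cases y <;> simp_all
  · exact dist_eq_one_iff_adj.mpr (by cases x <;> cases y <;> simp_all)

lemma completeBipartiteGraph_preconnected [Nonempty α] [Nonempty β] :
    (completeBipartiteGraph α β).Preconnected := by
  classical
  intro x y
  by_cases hxy : x = y
  · exact hxy ▸ Reachable.refl x
  · exact Reachable.of_dist_ne_zero (by rw [completeBipartiteGraph_dist]; split_ifs <;> simp)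

lemma completeBipartiteGraph_dist_eq_of_isLeft_eq [Nonempty α] [Nonempty β] {x y w : α ⊕ β}
    (hside : x.isLeft = y.isLeft) (hwx : w ≠ x) (hwy : w ≠ y) :
    (completeBipartiteGraph α β).dist x w = (completeBipartiteGraph α β).dist y w := by
  classical
  simp only [completeBipartiteGraph_dist, hside, hwx.symm, hwy.symm, if_false]

variable [Fintype α] [Fintype β]

lemma card_compl_le_two_of_resolves [DecidableEq α] [DecidableEq β] [Nonempty α] [Nonempty β]
    {W : Finset (α ⊕ β)} (hW : Resolves (completeBipartiteGraph α β) ↑W) :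
    Wᶜ.card ≤ 2 := by
  have hcard_side : ∀ b : Bool, (Wᶜ.filter (·.isLeft = b)).card ≤ 1 := by
    refine fun b ↦ Finset.card_le_one.mpr fun x hx y hy ↦ ?_
    simp only [Finset.mem_filter, Finset.mem_compl] at hx hy
    by_contra hxy
    have htwin := fun w ↦
      completeBipartiteGraph_dist_eq_of_isLeft_eq (w := w) (hx.2.trans hy.2.symm)
    rcases hW.mem_or_mem_of_dist_eq hxy htwin with h | h
    exacts [hx.1 h, hy.1 h]
  have hsplit := Finset.card_filter_add_card_filter_not (s := Wᶜ) (·.isLeft = true)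
  have := hcard_side true
  have := hcard_side false
  simp only [Bool.not_eq_true] at hsplit
  omega

lemma resolves_compl_pair [DecidableEq α] [DecidableEq β] [Nontrivial α] [Nonempty β]
    (a : α) (b : β) :
    Resolves (completeBipartiteGraph α β) ↑(({.inl a, .inr b} : Finset (α ⊕ β))ᶜ) := by
  obtain ⟨a', ha'⟩ := exists_ne a
  refine resolves_of_forall_notMem completeBipartiteGraph_preconnected fun u v hne hu hv ↦ ?_
  refine ⟨.inl a', by simp [ha'], ?_⟩
  simp only [Finset.coe_compl, Set.mem_compl_iff, Finset.coe_insert, Finset.coe_singleton,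
    Set.mem_insert_iff, Set.mem_singleton_iff, not_not] at hu hv
  rcases hu with rfl | rfl <;> rcases hv with rfl | rfl <;>
    simp [completeBipartiteGraph_dist, ha'.symm] at hne ⊢

theorem metricDim_completeBipartiteGraph [Nontrivial α] [Nontrivial β] :
    metricDim (completeBipartiteGraph α β) = Fintype.card α + Fintype.card β - 2 := by
  classical
  obtain ⟨a⟩ : Nonempty α := inferInstance
  obtain ⟨b⟩ : Nonempty β := inferInstance
  have hcard : (({.inl a, .inr b} : Finset (α ⊕ β))ᶜ).card =
      Fintype.card α + Fintype.card β - 2 := by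
    rw [Finset.card_compl, Finset.card_pair Sum.inl_ne_inr, Fintype.card_sum]
  refine IsLeast.csInf_eq ⟨⟨_, hcard, resolves_compl_pair a b⟩, ?_⟩
  rintro k ⟨W, rfl, hW⟩
  have := card_compl_le_two_of_resolves hW
  have := Finset.card_add_card_compl W
  rw [Fintype.card_sum] at this
  omega

end CompleteBipartite

theorem stmt9 (r s : ℕ) (hr : 2 ≤ r) (hs : 2 ≤ s) :
    metricDim (completeBipartiteGraph (Fin r) (Fin s)) = r + s - 2 := by
  have : Nontrivial (Fin r) := Fin.nontrivial_iff_two_le.mpr hr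
  have : Nontrivial (Fin s) := Fin.nontrivial_iff_two_le.mpr hs
  simpa using metricDim_completeBipartiteGraph (α := Fin r) (β := Fin s)
end

section
/- Let G be a connected graph containing a cycle, and let C = (v_1,...,v_g,v_1) be a shortest cycle in G. Then V(G) \ {v_3, v_4, ..., v_g} is a resolving set for G. -/
/-!
A shortest cycle `C` is isometric: if two of its vertices were joined in `G` by a path shorter
than both arcs of `C` between them, that path and either arc would contain a cycle shorter than
`C`. Hence the distances from `v₁` and `v₂` to `v_i` are `min (i - 1) (g - i + 1)` and
`min (i - 2) (g - i + 2)`, which together determine `i`. A vertex of the set is separated from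
every other vertex by its own distance `0`, so only pairs `v_i, v_j` with `3 ≤ i, j ≤ g` remain,
and `v₁, v₂` separate those.
-/

open SimpleGraph

namespace SimpleGraph

variable {V : Type*} {G : SimpleGraph V}

namespace Walk

lemma dist_getVert_le_sub {u v : V} (p : G.Walk u v) {a b : ℕ} (hab : a ≤ b) :
    G.dist (p.getVert a) (p.getVert b) ≤ b - a := by
  have hend : (p.drop a).getVert (b - a) = p.getVert b := by
    rw [drop_getVert, Nat.add_sub_cancel' hab]
  calc G.dist (p.getVert a) (p.getVert b)
      ≤ (((p.drop a).take (b - a)).copy rfl hend).length := dist_le _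
    _ ≤ b - a := by simp

lemma dist_getVert_le_length_sub {v : V} (p : G.Walk v v) {a b : ℕ} (hab : a ≤ b)
    (hb : b ≤ p.length) :
    G.dist (p.getVert a) (p.getVert b) ≤ p.length - (b - a) := by
  rw [dist_comm]
  calc G.dist (p.getVert b) (p.getVert a)
      ≤ ((p.drop b).append (p.take a)).length := dist_le _
    _ = p.length - (b - a) := by simp only [length_append, drop_length, take_length]; omega

lemma IsCycle.dist_getVert_of_length_eq_girth {v : V} {p : G.Walk v v} (hp : p.IsCycle)
    (hg : p.length = G.girth) {a b : ℕ} (hab : a ≤ b) (hb : b < p.length) :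
    G.dist (p.getVert a) (p.getVert b) = min (b - a) (p.length - (b - a)) := by
  refine le_antisymm (le_min (p.dist_getVert_le_sub hab)
    (p.dist_getVert_le_length_sub hab hb.le)) ?_
  by_contra! hshort
  have hstart : (p.take b).getVert a = p.getVert a := by rw [take_getVert, min_eq_right hab]
  let arc := ((p.take b).drop a).copy hstart rfl
  have harc : arc.IsPath := by simpa [arc] using (hp.isPath_take hb).drop a
  have harc_length : arc.length = b - a := by simp [arc, hb.le]
  obtain ⟨P, hP, hP_length⟩ := arc.reachable.exists_path_of_dist
  have hne : P ≠ arc := fun h => by rw [h] at hP_length; omega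
  obtain ⟨w, -, -, c, hc, hc_length⟩ := hP.exists_isCycle_length_le_add_of_ne harc hne
  have := G.girth_le_length hc
  omega

lemma exists_getVert_eq_of_mem_support {u v : V} {p : G.Walk v v} (hu : u ∈ p.support)
    (hv : u ≠ v) (hv₁ : u ≠ p.getVert 1) : ∃ i, p.getVert i = u ∧ 2 ≤ i ∧ i < p.length := by
  obtain ⟨i, rfl, hi⟩ := mem_support_iff_exists_getVert.mp hu
  have hi₀ : i ≠ 0 := by rintro rfl; exact hv p.getVert_zero
  have hi₁ : i ≠ 1 := by rintro rfl; exact hv₁ rfl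
  have hi_length : i ≠ p.length := by rintro rfl; exact hv p.getVert_length
  exact ⟨i, rfl, by omega, by omega⟩

end Walk

lemma resolves_of_forall_notMem (hG : G.Connected) {W : Set V}
    (h : ∀ u₁ u₂, u₁ ∉ W → u₂ ∉ W → u₁ ≠ u₂ → ∃ w ∈ W, G.dist u₁ w ≠ G.dist u₂ w) :
    Resolves G W := by
  intro u₁ u₂ hne
  by_cases hu₁ : u₁ ∈ W
  · exact ⟨u₁, hu₁, by rw [dist_self]; exact (hG.pos_dist_of_ne hne.symm).ne⟩
  by_cases hu₂ : u₂ ∈ W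
  · exact ⟨u₂, hu₂, by rw [dist_self]; exact (hG.pos_dist_of_ne hne).ne'⟩
  exact h u₁ u₂ hu₁ hu₂ hne

end SimpleGraph

theorem stmt19_general {V : Type*} (G : SimpleGraph V) (hG : G.Connected)
    (v : V) (p : G.Walk v v) (hp : p.IsCycle)
    (hlen : p.length = G.girth) :
    Resolves G (({x : V | x ∈ p.support} \ {v, p.getVert 1})ᶜ) := by
  refine resolves_of_forall_notMem hG fun u₁ u₂ hu₁ hu₂ hne => ?_
  simp only [Set.notMem_compl_iff, Set.mem_sdiff, Set.mem_ofPred_eq, Set.mem_insert_iff,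
    Set.mem_singleton_iff, not_or] at hu₁ hu₂
  obtain ⟨i, rfl, hi₂, hi⟩ := Walk.exists_getVert_eq_of_mem_support hu₁.1 hu₁.2.1 hu₁.2.2
  obtain ⟨j, rfl, hj₂, hj⟩ := Walk.exists_getVert_eq_of_mem_support hu₂.1 hu₂.2.1 hu₂.2.2
  have hdist {a k : ℕ} (hak : a ≤ k) (hk : k < p.length) :
      G.dist (p.getVert k) (p.getVert a) = min (k - a) (p.length - (k - a)) := by
    rw [dist_comm, hp.dist_getVert_of_length_eq_girth hlen hak hk]
  by_contra! hsame
  have h₀ := hsame (p.getVert 0) (by simp)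
  have h₁ := hsame (p.getVert 1) (by simp)
  rw [hdist (Nat.zero_le i) hi, hdist (Nat.zero_le j) hj] at h₀
  rw [hdist (by omega) hi, hdist (by omega) hj] at h₁
  exact hne (congrArg p.getVert (by omega))

theorem stmt19 {V : Type*} [Fintype V] (G : SimpleGraph V) (hG : G.Connected)
    (hc : ¬ G.IsAcyclic) (v : V) (p : G.Walk v v) (hp : p.IsCycle)
    (hlen : p.length = G.girth) :
    Resolves G (({x : V | x ∈ p.support} \ {v, p.getVert 1})ᶜ) :=
  stmt19_general G hG v p hp hlen
end
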